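/- Let d ≥ 1, σ > 0, and let P be a Borel probability measure on ℝ^d satisfying ∫_{ℝ^d} Var_P(φ_σ(x−·)) / (P∗φ_σ(x)) dx < ∞. Let X_1,…,X_n be i.i.d. with law P and P_n the empirical measure. Then for every n ≥ 1, n · E[χ²(P_n∗N_σ ‖ P∗N_σ)] = ∫_{ℝ^d} Var_P(φ_σ(x−·)) / (P∗φ_σ(x)) dx. -/

import Mathlib

open MeasureTheory ProbabilityTheory Real Filter
open scoped ENNReal NNReal

/-- The isotropic Gaussian density `φ_σ` on `ℝ^d`. -/
noncomputable def gaussDensity (d : ℕ) (σ : ℝ) (x : EuclideanSpace ℝ (Fin d)) : ℝ :=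
  (2 * π * σ ^ 2) ^ (-(d : ℝ) / 2) * Real.exp (-‖x‖ ^ 2 / (2 * σ ^ 2))

/-- Density of the smoothed empirical measure: `p̄_n(x) = n⁻¹ ∑_{i<n} φ_σ(x − X_i)`. -/
noncomputable def empDensity {Ω : Type*} {d : ℕ} (σ : ℝ)
    (X : ℕ → Ω → EuclideanSpace ℝ (Fin d)) (n : ℕ) (ω : Ω)
    (x : EuclideanSpace ℝ (Fin d)) : ℝ :=
  (n : ℝ)⁻¹ * ∑ i ∈ Finset.range n, gaussDensity d σ (x - X i ω)

/-!
For fixed `x`, `p̄_n(x)` is the mean of the `n` i.i.d. bounded variables `φ_σ(x - X_i)`, whose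
common expectation is `P∗φ_σ(x)` and whose common variance is `Var_P(φ_σ(x - ·))`. Hence the
expected squared deviation `E[(p̄_n(x) - P∗φ_σ(x))²]` is `Var_P(φ_σ(x - ·)) / n`, and Tonelli
exchanges the expectation with the integral over `x`.
-/

open Finset

section Gaussian

variable {d : ℕ} {σ : ℝ}

lemma gaussDensity_nonneg (x : EuclideanSpace ℝ (Fin d)) : 0 ≤ gaussDensity d σ x :=
  mul_nonneg (rpow_nonneg (by positivity) _) (exp_nonneg _)

lemma gaussDensity_pos (hσ : 0 < σ) (x : EuclideanSpace ℝ (Fin d)) : 0 < gaussDensity d σ x :=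
  mul_pos (rpow_pos_of_pos (by positivity) _) (exp_pos _)

lemma gaussDensity_le_gaussDensity_zero (x : EuclideanSpace ℝ (Fin d)) :
    gaussDensity d σ x ≤ gaussDensity d σ 0 := by
  unfold gaussDensity
  gcongr
  simp

lemma continuous_gaussDensity : Continuous (gaussDensity d σ) := by
  unfold gaussDensity
  fun_prop

lemma continuous_gaussDensity_sub (x : EuclideanSpace ℝ (Fin d)) :
    Continuous fun y => gaussDensity d σ (x - y) :=
  continuous_gaussDensity.comp (continuous_const.sub continuous_id)

lemma norm_gaussDensity_le (x : EuclideanSpace ℝ (Fin d)) :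
    ‖gaussDensity d σ x‖ ≤ gaussDensity d σ 0 := by
  rw [norm_of_nonneg (gaussDensity_nonneg x)]
  exact gaussDensity_le_gaussDensity_zero x

end Gaussian

section Smoothing

variable {d : ℕ} {σ : ℝ} {P : Measure (EuclideanSpace ℝ (Fin d))}

lemma memLp_gaussDensity_sub [IsFiniteMeasure P] (p : ℝ≥0∞) (x : EuclideanSpace ℝ (Fin d)) :
    MemLp (fun y => gaussDensity d σ (x - y)) p P :=
  MemLp.of_bound (continuous_gaussDensity_sub x).aestronglyMeasurable _
    (ae_of_all _ fun y => norm_gaussDensity_le (x - y))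

lemma integral_gaussDensity_sub_pos [IsFiniteMeasure P] [NeZero P] (hσ : 0 < σ)
    (x : EuclideanSpace ℝ (Fin d)) : 0 < ∫ y, gaussDensity d σ (x - y) ∂P := by
  refine (integral_pos_iff_support_of_nonneg (fun y => gaussDensity_nonneg (x - y))
    ((memLp_gaussDensity_sub 1 x).integrable le_rfl)).mpr ?_
  rw [Function.support_eq_univ fun y => (gaussDensity_pos hσ (x - y)).ne']
  simpa using NeZero.ne P

lemma continuous_integral_gaussDensity_sub [IsFiniteMeasure P] :
    Continuous fun x => ∫ y, gaussDensity d σ (x - y) ∂P :=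
  continuous_of_dominated (fun x => (memLp_gaussDensity_sub 1 x).aestronglyMeasurable)
    (fun x => ae_of_all _ fun y => norm_gaussDensity_le (x - y)) (integrable_const _)
    (ae_of_all _ fun _ => continuous_gaussDensity.comp (continuous_id.sub continuous_const))

end Smoothing

section SampleMean

variable {Ω E : Type*} [MeasurableSpace Ω] [MeasurableSpace E] {μ : Measure Ω}
  {P : Measure E} {X : ℕ → Ω → E} {f : E → ℝ}

lemma lintegral_ofReal_sq_sub_integral [IsFiniteMeasure μ] {Z : Ω → ℝ} (hZ : MemLp Z 2 μ) :
    ∫⁻ ω, ENNReal.ofReal ((Z ω - ∫ ω', Z ω' ∂μ) ^ 2) ∂μ = ENNReal.ofReal (variance Z μ) := by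
  rw [hZ.ofReal_variance_eq, evariance]
  refine lintegral_congr fun ω => ?_
  rw [Real.enorm_eq_ofReal_abs, ← ENNReal.ofReal_pow (abs_nonneg _), sq_abs]

lemma integral_sampleMean (hX : ∀ i, MeasurePreserving (X i) μ P) (hf : Integrable f P)
    {n : ℕ} (hn : n ≠ 0) :
    ∫ ω, (n : ℝ)⁻¹ * ∑ i ∈ range n, f (X i ω) ∂μ = ∫ y, f y ∂P := by
  have hcomp : ∀ i, ∫ ω, f (X i ω) ∂μ = ∫ y, f y ∂P := fun i => by
    rw [← (hX i).map_eq, integral_map (hX i).aemeasurable]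
    exact (hX i).map_eq ▸ hf.aestronglyMeasurable
  have hint : ∀ i, Integrable (fun ω => f (X i ω)) μ := fun i =>
    (hX i).integrable_comp_of_integrable hf
  rw [integral_const_mul, integral_finsetSum _ fun i _ => hint i]
  simp [hcomp, hn]

lemma variance_sampleMean (hX : ∀ i, MeasurePreserving (X i) μ P)
    (hindep : Pairwise fun i j => IndepFun (X i) (X j) μ) (hf : Measurable f)
    (hf2 : MemLp f 2 P) (n : ℕ) :
    variance (fun ω => (n : ℝ)⁻¹ * ∑ i ∈ range n, f (X i ω)) μ = variance f P / n := by
  have hmem : ∀ i, MemLp (fun ω => f (X i ω)) 2 μ := fun i => hf2.comp_measurePreserving (hX i)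
  have hvar_sum : variance (fun ω => ∑ i ∈ range n, f (X i ω)) μ = n * variance f P := by
    rw [← Finset.sum_fn, IndepFun.variance_sum (fun i _ => hmem i)
      (fun i _ j _ hij => (hindep hij).comp hf hf)]
    simp [(hX _).variance_fun_comp hf.aemeasurable]
  rw [variance_const_mul, hvar_sum]
  rcases eq_or_ne n 0 with rfl | hn
  · simp
  · field_simp

lemma lintegral_sq_sampleMean_sub [IsFiniteMeasure μ] (hX : ∀ i, MeasurePreserving (X i) μ P)
    (hindep : Pairwise fun i j => IndepFun (X i) (X j) μ) (hf : Measurable f)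
    (hf2 : MemLp f 2 P) {n : ℕ} (hn : n ≠ 0) :
    ∫⁻ ω, ENNReal.ofReal (((n : ℝ)⁻¹ * ∑ i ∈ range n, f (X i ω) - ∫ y, f y ∂P) ^ 2) ∂μ
      = ENNReal.ofReal (variance f P / n) := by
  have : IsFiniteMeasure P := (hX 0).map_eq ▸ Measure.isFiniteMeasure_map μ (X 0)
  have hmem : MemLp (fun ω => (n : ℝ)⁻¹ * ∑ i ∈ range n, f (X i ω)) 2 μ :=
    (memLp_finsetSum _ fun i _ => hf2.comp_measurePreserving (hX i)).const_mul _
  rw [← integral_sampleMean hX (hf2.integrable one_le_two) hn,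
    lintegral_ofReal_sq_sub_integral hmem, variance_sampleMean hX hindep hf hf2]

end SampleMean

section ChiSquare

variable {Ω : Type*} [MeasurableSpace Ω] {μ : Measure Ω} {d : ℕ} {σ : ℝ}
  {P : Measure (EuclideanSpace ℝ (Fin d))} {X : ℕ → Ω → EuclideanSpace ℝ (Fin d)} {n : ℕ}

lemma measurable_chiSq_integrand [IsFiniteMeasure P] (hmeas : ∀ i, Measurable (X i)) :
    Measurable (Function.uncurry fun ω x => ENNReal.ofReal
      ((empDensity σ X n ω x - ∫ y, gaussDensity d σ (x - y) ∂P) ^ 2 /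
        ∫ y, gaussDensity d σ (x - y) ∂P)) := by
  have hemp : Measurable (Function.uncurry (empDensity σ X n)) :=
    measurable_const.mul <| Finset.measurable_sum _ fun i _ =>
      continuous_gaussDensity.measurable.comp (measurable_snd.sub ((hmeas i).comp measurable_fst))
  have hsmooth : Measurable fun p : Ω × EuclideanSpace ℝ (Fin d) =>
      ∫ y, gaussDensity d σ (p.2 - y) ∂P :=
    continuous_integral_gaussDensity_sub.measurable.comp measurable_snd
  exact (((hemp.sub hsmooth).pow_const 2).div hsmooth).ennreal_ofReal

lemma lintegral_chiSq_integrand [IsFiniteMeasure μ] [IsFiniteMeasure P] [NeZero P] (hσ : 0 < σ)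
    (hX : ∀ i, MeasurePreserving (X i) μ P) (hindep : Pairwise fun i j => IndepFun (X i) (X j) μ)
    (hn : n ≠ 0) (x : EuclideanSpace ℝ (Fin d)) :
    ∫⁻ ω, ENNReal.ofReal ((empDensity σ X n ω x - ∫ y, gaussDensity d σ (x - y) ∂P) ^ 2 /
        ∫ y, gaussDensity d σ (x - y) ∂P) ∂μ
      = ENNReal.ofReal (variance (fun y => gaussDensity d σ (x - y)) P /
          ∫ y, gaussDensity d σ (x - y) ∂P) / n := by
  have hc := integral_gaussDensity_sub_pos (P := P) hσ x
  have hsq := lintegral_sq_sampleMean_sub (f := fun y => gaussDensity d σ (x - y)) hX hindep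
    (continuous_gaussDensity_sub x).measurable (memLp_gaussDensity_sub 2 x) hn
  simp_rw [ENNReal.ofReal_div_of_pos hc, div_eq_mul_inv]
  rw [lintegral_mul_const' _ _ (ENNReal.inv_ne_top.2 (ENNReal.ofReal_pos.2 hc).ne')]
  simp only [empDensity]
  rw [hsq, ENNReal.ofReal_div_of_pos (by positivity), ENNReal.ofReal_natCast, div_eq_mul_inv,
    mul_right_comm]

end ChiSquare

theorem smooth_chiSq_expectation_general
    {Ω : Type*} [MeasurableSpace Ω] (μ : Measure Ω) [IsProbabilityMeasure μ]
    (d : ℕ) (σ : ℝ) (hσ : 0 < σ)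
    (P : Measure (EuclideanSpace ℝ (Fin d))) [IsProbabilityMeasure P]
    (X : ℕ → Ω → EuclideanSpace ℝ (Fin d))
    (hmeas : ∀ i, Measurable (X i))
    (hindep : iIndepFun X μ)
    (hlaw : ∀ i, μ.map (X i) = P)
    (n : ℕ) (hn : 1 ≤ n) :
    (n : ℝ≥0∞) * ∫⁻ ω, (∫⁻ x, ENNReal.ofReal
        ((empDensity σ X n ω x - ∫ y, gaussDensity d σ (x - y) ∂P) ^ 2 /
          ∫ y, gaussDensity d σ (x - y) ∂P)) ∂μ
      = ∫⁻ x, ENNReal.ofReal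
          (variance (fun y => gaussDensity d σ (x - y)) P /
            ∫ y, gaussDensity d σ (x - y) ∂P) := by
  have hn0 : n ≠ 0 := by omega
  have hX : ∀ i, MeasurePreserving (X i) μ P := fun i => ⟨hmeas i, hlaw i⟩
  have hn_ne_zero : (n : ℝ≥0∞) ≠ 0 := Nat.cast_ne_zero.2 hn0
  rw [lintegral_lintegral_swap (measurable_chiSq_integrand hmeas).aemeasurable]
  simp_rw [lintegral_chiSq_integrand hσ hX (fun i j hij => hindep.indepFun hij) hn0,
    ENNReal.div_eq_inv_mul]
  rw [lintegral_const_mul' _ _ (ENNReal.inv_ne_top.2 hn_ne_zero), ← mul_assoc,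
    ENNReal.mul_inv_cancel hn_ne_zero (ENNReal.natCast_ne_top n), one_mul]

/-- **Exact expected value of the smooth χ²-divergence:**
`n · E[χ²(P_n∗N_σ ∥ P∗N_σ)] = ∫ Var_P(φ_σ(x−·)) / (P∗φ_σ(x)) dx`. -/
theorem smooth_chiSq_expectation
    {Ω : Type*} [MeasurableSpace Ω] (μ : Measure Ω) [IsProbabilityMeasure μ]
    (d : ℕ) (hd : 1 ≤ d) (σ : ℝ) (hσ : 0 < σ)
    (P : Measure (EuclideanSpace ℝ (Fin d))) [IsProbabilityMeasure P]
    (hP : ∫⁻ x, ENNReal.ofReal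
        (variance (fun y => gaussDensity d σ (x - y)) P / ∫ y, gaussDensity d σ (x - y) ∂P)
      < ⊤)
    (X : ℕ → Ω → EuclideanSpace ℝ (Fin d))
    (hmeas : ∀ i, Measurable (X i))
    (hindep : iIndepFun X μ)
    (hlaw : ∀ i, μ.map (X i) = P)
    (n : ℕ) (hn : 1 ≤ n) :
    (n : ℝ≥0∞) * ∫⁻ ω, (∫⁻ x, ENNReal.ofReal
        ((empDensity σ X n ω x - ∫ y, gaussDensity d σ (x - y) ∂P) ^ 2 /
          ∫ y, gaussDensity d σ (x - y) ∂P)) ∂μ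
      = ∫⁻ x, ENNReal.ofReal
          (variance (fun y => gaussDensity d σ (x - y)) P /
            ∫ y, gaussDensity d σ (x - y) ∂P) :=
  smooth_chiSq_expectation_general μ d σ hσ P X hmeas hindep hlaw n hn
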